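/- (Nonlocal symmetry of the Lax pair.) Let q : ℝ×ℝ → ℂ be smooth, ρ ∈ ℝ, λ ∈ ℂ\{0}, and suppose Φ = (φ₁, φ₂) : ℝ×ℝ → ℂ² is a smooth solution of ∂ₓΦ = U(λ)Φ and ∂ₜΦ = V(λ)Φ at every (x,t). Then Ψ(x,t) := (φ₂(−x,−t), φ₁(−x,−t)) is also a smooth solution of ∂ₓΨ = U(λ)Ψ and ∂ₜΨ = V(λ)Ψ at every (x,t) ∈ ℝ². -/

import Mathlib

open Complex

/-- Partial derivative in the space variable `x` (first coordinate). -/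
noncomputable def pdx (f : ℝ × ℝ → ℂ) : ℝ × ℝ → ℂ :=
  fun p => deriv (fun x => f (x, p.2)) p.1

/-- Partial derivative in the time variable `t` (second coordinate). -/
noncomputable def pdt (f : ℝ × ℝ → ℂ) : ℝ × ℝ → ℂ :=
  fun p => deriv (fun t => f (p.1, t)) p.2

/-- The reverse space-time reflection `q̃(x,t) = q(-x,-t)`. -/
def tq (q : ℝ × ℝ → ℂ) : ℝ × ℝ → ℂ := fun p => q (-p.1, -p.2)

/-- `q̂₁(x,t) = (∂ₓq)(-x,-t)`. -/
noncomputable def hq1 (q : ℝ × ℝ → ℂ) : ℝ × ℝ → ℂ := fun p => pdx q (-p.1, -p.2)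

/-- `q̂₂(x,t) = (∂ₓ²q)(-x,-t)`. -/
noncomputable def hq2 (q : ℝ × ℝ → ℂ) : ℝ × ℝ → ℂ := fun p => pdx (pdx q) (-p.1, -p.2)

/-- Entry `V₁` of the nonlocal Lax matrix `V(λ)`. -/
noncomputable def Vent1 (q : ℝ × ℝ → ℂ) (ρ : ℝ) (l : ℂ) (p : ℝ × ℝ) : ℂ :=
  -(3 * I / 2) * (q p) ^ 2 * (tq q p) ^ 2 / l ^ 2 - 4 * I * (ρ : ℂ) ^ 2
    - hq1 q p * q p / l ^ 2 - pdx q p * tq q p / l ^ 2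
    + 2 * I * q p * tq q p / l ^ 4 + 8 * I * (ρ : ℂ) / l ^ 4 - 4 * I / l ^ 6

/-- Entry `V₂` of the nonlocal Lax matrix `V(λ)`. -/
noncomputable def Vent2 (q : ℝ × ℝ → ℂ) (ρ : ℝ) (l : ℂ) (p : ℝ × ℝ) : ℂ :=
  -pdx (pdx q) p / l - 3 * I * pdx q p * q p * tq q p / l + 2 * I * pdx q p / l ^ 3
    + (3 / 2) * (q p) ^ 3 * (tq q p) ^ 2 / l - 4 * q p * (ρ : ℂ) ^ 2 / l
    - 2 * (q p) ^ 2 * tq q p * (ρ : ℂ) / l - 2 * (q p) ^ 2 * tq q p / l ^ 3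
    - 4 * q p * (ρ : ℂ) / l ^ 3 + 4 * q p / l ^ 5

/-- Entry `V₃` of the nonlocal Lax matrix `V(λ)`. -/
noncomputable def Vent3 (q : ℝ × ℝ → ℂ) (ρ : ℝ) (l : ℂ) (p : ℝ × ℝ) : ℂ :=
  hq2 q p / l + 3 * I * hq1 q p * q p * tq q p / l - 2 * I * hq1 q p / l ^ 3
    - (3 / 2) * (q p) ^ 2 * (tq q p) ^ 3 / l + 2 * q p * (tq q p) ^ 2 * (ρ : ℂ) / l
    + 2 * q p * (tq q p) ^ 2 / l ^ 3 + 4 * tq q p * (ρ : ℂ) ^ 2 / l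
    + 4 * tq q p * (ρ : ℂ) / l ^ 3 - 4 * tq q p / l ^ 5

lemma pdx_reflect (f : ℝ × ℝ → ℂ) (p : ℝ × ℝ) :
    pdx (fun p => f (-p.1, -p.2)) p = -(pdx f (-p.1, -p.2)) := by
  have := deriv_comp_neg (f := fun x => f (x, -p.2)) (x := p.1)
  simpa [pdx] using this

lemma pdt_reflect (f : ℝ × ℝ → ℂ) (p : ℝ × ℝ) :
    pdt (fun p => f (-p.1, -p.2)) p = -(pdt f (-p.1, -p.2)) := by
  have := deriv_comp_neg (f := fun t => f (-p.1, t)) (x := p.2)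
  simpa [pdt] using this

lemma tq_reflect (q : ℝ × ℝ → ℂ) (p : ℝ × ℝ) : tq q (-p.1, -p.2) = q p := by
  simp [tq]

lemma hq1_reflect (q : ℝ × ℝ → ℂ) (p : ℝ × ℝ) : hq1 q (-p.1, -p.2) = pdx q p := by
  simp [hq1]

lemma hq2_reflect (q : ℝ × ℝ → ℂ) (p : ℝ × ℝ) :
    hq2 q (-p.1, -p.2) = pdx (pdx q) p := by
  simp [hq2]

lemma Vent1_reflect (q : ℝ × ℝ → ℂ) (ρ : ℝ) (l : ℂ) (p : ℝ × ℝ) :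
    Vent1 q ρ l (-p.1, -p.2) = Vent1 q ρ l p := by
  simp only [Vent1, tq_reflect, hq1_reflect]
  have h1 : q (-p.1, -p.2) = tq q p := rfl
  have h2 : pdx q (-p.1, -p.2) = hq1 q p := rfl
  rw [h1, h2]; ring

lemma Vent3_reflect (q : ℝ × ℝ → ℂ) (ρ : ℝ) (l : ℂ) (p : ℝ × ℝ) :
    Vent3 q ρ l (-p.1, -p.2) = -Vent2 q ρ l p := by
  simp only [Vent2, Vent3, tq_reflect, hq1_reflect, hq2_reflect]
  have h1 : q (-p.1, -p.2) = tq q p := rfl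
  rw [h1]; ring

lemma Vent2_reflect (q : ℝ × ℝ → ℂ) (ρ : ℝ) (l : ℂ) (p : ℝ × ℝ) :
    Vent2 q ρ l (-p.1, -p.2) = -Vent3 q ρ l p := by
  simp only [Vent2, Vent3, tq_reflect, hq1_reflect]
  have h1 : q (-p.1, -p.2) = tq q p := rfl
  have h2 : pdx q (-p.1, -p.2) = hq1 q p := rfl
  have h3 : pdx (pdx q) (-p.1, -p.2) = hq2 q p := rfl
  rw [h1, h2, h3]; ring

/-- the reverse space-time nonlocal symmetry of the Lax pair: if
`(φ₁, φ₂)` solves the nonlocal Lax pair, then so does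
`Ψ(x,t) = (φ₂(-x,-t), φ₁(-x,-t))`. -/
theorem nonlocal_symmetry_of_lax_pair
    (q : ℝ × ℝ → ℂ) (hq : ContDiff ℝ (⊤ : ℕ∞) q) (ρ : ℝ) (l : ℂ) (hl : l ≠ 0)
    (φ1 φ2 : ℝ × ℝ → ℂ) (h1 : ContDiff ℝ (⊤ : ℕ∞) φ1) (h2 : ContDiff ℝ (⊤ : ℕ∞) φ2)
    (hx : ∀ p : ℝ × ℝ,
      pdx φ1 p = (-I / l ^ 2 + (ρ : ℂ) * I) * φ1 p + q p / l * φ2 p ∧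
      pdx φ2 p = -(tq q p / l) * φ1 p + (I / l ^ 2 - (ρ : ℂ) * I) * φ2 p)
    (ht : ∀ p : ℝ × ℝ,
      pdt φ1 p = Vent1 q ρ l p * φ1 p + Vent2 q ρ l p * φ2 p ∧
      pdt φ2 p = Vent3 q ρ l p * φ1 p - Vent1 q ρ l p * φ2 p) :
    let ψ1 : ℝ × ℝ → ℂ := fun p => φ2 (-p.1, -p.2)
    let ψ2 : ℝ × ℝ → ℂ := fun p => φ1 (-p.1, -p.2)
    ContDiff ℝ (⊤ : ℕ∞) ψ1 ∧ ContDiff ℝ (⊤ : ℕ∞) ψ2 ∧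
    ∀ p : ℝ × ℝ,
      (pdx ψ1 p = (-I / l ^ 2 + (ρ : ℂ) * I) * ψ1 p + q p / l * ψ2 p) ∧
      (pdx ψ2 p = -(tq q p / l) * ψ1 p + (I / l ^ 2 - (ρ : ℂ) * I) * ψ2 p) ∧
      (pdt ψ1 p = Vent1 q ρ l p * ψ1 p + Vent2 q ρ l p * ψ2 p) ∧
      (pdt ψ2 p = Vent3 q ρ l p * ψ1 p - Vent1 q ρ l p * ψ2 p) := by
  intro ψ1 ψ2
  have hneg : ContDiff ℝ (⊤ : ℕ∞) (fun p : ℝ × ℝ => ((-p.1, -p.2) : ℝ × ℝ)) :=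
    ContDiff.prodMk (contDiff_fst.neg) (contDiff_snd.neg)
  refine ⟨h2.comp hneg, h1.comp hneg, fun p => ?_⟩
  set np : ℝ × ℝ := (-p.1, -p.2) with hnp
  have e1 : ψ1 p = φ2 np := rfl
  have e2 : ψ2 p = φ1 np := rfl
  have hq' : q p = tq q np := (tq_reflect q p).symm
  have htq' : tq q p = q np := rfl
  refine ⟨?_, ?_, ?_, ?_⟩
  · rw [show pdx ψ1 p = -(pdx φ2 np) from pdx_reflect φ2 p, (hx np).2, e1, e2,
      tq_reflect q p, hq']
    ring
  · rw [show pdx ψ2 p = -(pdx φ1 np) from pdx_reflect φ1 p, (hx np).1, e1, e2, htq']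
    ring
  · rw [show pdt ψ1 p = -(pdt φ2 np) from pdt_reflect φ2 p, (ht np).2, e1, e2,
      Vent1_reflect q ρ l p, Vent3_reflect q ρ l p]
    ring
  · rw [show pdt ψ2 p = -(pdt φ1 np) from pdt_reflect φ1 p, (ht np).1, e1, e2,
      Vent1_reflect q ρ l p, Vent2_reflect q ρ l p]
    ring
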